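/- arXiv:1409.6027 — 7 statements merged into one kernel-verified Lean document; each statement's English description precedes it below -/
import Mathlib

section
/- For all θ with 0 < θ < 2π, the function ψ(θ) = (θ - sin θ)/(1 - cos θ) satisfies ψ'(θ) > 0; equivalently, ψ is strictly increasing on the interval (0, 2π). -/
/-! ψ'(θ) = (2 - 2 cos θ - θ sin θ) / (1 - cos θ)², and with t = θ/2 the numerator is
4 sin t (sin t - t cos t). On (0, π) this is positive: for t < π/2 because tan t > t, and for
t ≥ π/2 because cos t ≤ 0 < sin t. -/

open Real Set

lemma mul_cos_lt_sin {t : ℝ} (h0 : 0 < t) (hπ : t < π) : t * cos t < sin t := by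
  have hsin : 0 < sin t := sin_pos_of_pos_of_lt_pi h0 hπ
  rcases lt_or_ge t (π / 2) with ht | ht
  · have hcos : 0 < cos t := cos_pos_of_mem_Ioo ⟨by linarith, ht⟩
    have := lt_tan h0 ht
    rwa [tan_eq_sin_div_cos, lt_div_iff₀ hcos] at this
  · have hcos : cos t ≤ 0 := cos_nonpos_of_pi_div_two_le_of_le ht (by linarith)
    nlinarith

lemma one_sub_cos_pos_of_mem_Ioo {θ : ℝ} (hθ : θ ∈ Ioo 0 (2 * π)) : 0 < 1 - cos θ := by
  have hne : cos θ ≠ 1 := by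
    rw [Ne, cos_eq_one_iff_of_lt_of_lt (by linarith [hθ.1, pi_pos]) hθ.2]
    exact hθ.1.ne'
  linarith [(cos_le_one θ).lt_of_ne hne]

lemma two_sub_two_mul_cos_sub_mul_sin (θ : ℝ) :
    2 - 2 * cos θ - θ * sin θ = 4 * sin (θ / 2) * (sin (θ / 2) - θ / 2 * cos (θ / 2)) := by
  have hθ : θ = 2 * (θ / 2) := by ring
  conv_lhs => rw [hθ, cos_two_mul, sin_two_mul]
  linear_combination -4 * sin_sq_add_cos_sq (θ / 2)

lemma two_sub_two_mul_cos_sub_mul_sin_pos {θ : ℝ} (hθ : θ ∈ Ioo 0 (2 * π)) :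
    0 < 2 - 2 * cos θ - θ * sin θ := by
  have h0 : 0 < θ / 2 := by linarith [hθ.1]
  have hπ : θ / 2 < π := by linarith [hθ.2]
  rw [two_sub_two_mul_cos_sub_mul_sin]
  exact mul_pos (mul_pos four_pos (sin_pos_of_pos_of_lt_pi h0 hπ))
    (sub_pos.2 (mul_cos_lt_sin h0 hπ))

noncomputable def psi (θ : ℝ) : ℝ := (θ - sin θ) / (1 - cos θ)

lemma hasDerivAt_psi {θ : ℝ} (hθ : 1 - cos θ ≠ 0) :
    HasDerivAt psi ((2 - 2 * cos θ - θ * sin θ) / (1 - cos θ) ^ 2) θ := by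
  have hnum : HasDerivAt (fun θ : ℝ => θ - sin θ) (1 - cos θ) θ :=
    (hasDerivAt_id θ).sub (hasDerivAt_sin θ)
  have hden : HasDerivAt (fun θ : ℝ => 1 - cos θ) (sin θ) θ := by
    simpa using (hasDerivAt_cos θ).const_sub 1
  refine (hnum.div hden hθ).congr_deriv ?_
  congr 1
  linear_combination sin_sq_add_cos_sq θ

lemma deriv_psi_pos {θ : ℝ} (hθ : θ ∈ Ioo 0 (2 * π)) : 0 < deriv psi θ := by
  have hden := one_sub_cos_pos_of_mem_Ioo hθ
  rw [(hasDerivAt_psi hden.ne').deriv]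
  exact div_pos (two_sub_two_mul_cos_sub_mul_sin_pos hθ) (pow_pos hden 2)

theorem psi_strict_increasing :
    (∀ θ ∈ Set.Ioo (0:ℝ) (2*π),
      0 < deriv (fun θ : ℝ => (θ - Real.sin θ) / (1 - Real.cos θ)) θ) ∧
    StrictMonoOn (fun θ : ℝ => (θ - Real.sin θ) / (1 - Real.cos θ))
      (Set.Ioo (0:ℝ) (2*π)) := by
  refine ⟨fun θ hθ => deriv_psi_pos hθ, strictMonoOn_of_deriv_pos (convex_Ioo 0 (2 * π)) ?_ ?_⟩
  · exact fun θ hθ =>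
      (hasDerivAt_psi (one_sub_cos_pos_of_mem_Ioo hθ).ne').continuousAt.continuousWithinAt
  · rw [interior_Ioo]
    exact fun θ hθ => deriv_psi_pos hθ
end

section
/- Let f(v,δ) = [(v+1)(δ - sin δ) + 2√v (2 sin(δ/2) - δ cos(δ/2))] / (2 sin²(δ/2)). Then for all v ≥ 0 and 0 < δ ≤ π, f(v,δ) ≤ (π²/12)(v + √v + 1)δ. -/
/-!
Put `x = δ / 2`. The two brackets of the numerator are bounded by cubes,
`δ - sin δ ≤ δ ^ 3 / 6` and `sin x - x cos x ≤ x ^ 3 / 3`, and Jordan's inequality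
`2 x / π ≤ sin x` on `[0, π / 2]` trades `x ^ 2` for `π ^ 2 / 4 * sin x ^ 2`. Both brackets are
then at most a multiple of `δ * sin x ^ 2`, which cancels against the denominator.
-/

open Real

namespace Real

theorem sin_sub_mul_cos_le {x : ℝ} (hx : 0 ≤ x) : sin x - x * cos x ≤ x ^ 3 / 3 := by
  let f (t : ℝ) : ℝ := t ^ 3 / 3 - (sin t - t * cos t)
  have hderiv (t : ℝ) : deriv f t = t * (t - sin t) := by
    simp (disch := fun_prop) [f]
    ring
  have hmono : MonotoneOn f (Set.Ici 0) := by
    apply monotoneOn_of_deriv_nonneg (convex_Ici 0) (by fun_prop) (by fun_prop)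
    intro t ht
    rw [interior_Ici] at ht
    rw [hderiv]
    exact mul_nonneg ht.le (sub_nonneg.2 (sin_le ht.le))
  have h0 : f 0 ≤ f x := hmono Set.self_mem_Ici hx hx
  simpa [f] using h0

theorem sq_le_pi_sq_div_four_mul_sin_sq {x : ℝ} (hx : 0 ≤ x) (hx' : x ≤ π / 2) :
    x ^ 2 ≤ π ^ 2 / 4 * sin x ^ 2 := by
  have hjordan : x ≤ π / 2 * sin x := by
    have := mul_le_sin hx hx'
    rw [div_mul_eq_mul_div, div_le_iff₀ pi_pos] at this
    linarith
  calc x ^ 2 ≤ (π / 2 * sin x) ^ 2 := pow_le_pow_left₀ hx hjordan 2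
    _ = π ^ 2 / 4 * sin x ^ 2 := by ring

theorem sub_sin_le_pi_sq_mul_sin_half_sq {x : ℝ} (hx : 0 ≤ x) (hx' : x ≤ π) :
    x - sin x ≤ π ^ 2 / 6 * x * sin (x / 2) ^ 2 := by
  have hhalf := sq_le_pi_sq_div_four_mul_sin_sq (x := x / 2) (by positivity) (by linarith)
  calc x - sin x ≤ x ^ 3 / 6 := by linarith [sin_ge_sub_cube hx]
    _ = 2 / 3 * x * (x / 2) ^ 2 := by ring
    _ ≤ 2 / 3 * x * (π ^ 2 / 4 * sin (x / 2) ^ 2) := by gcongr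
    _ = π ^ 2 / 6 * x * sin (x / 2) ^ 2 := by ring

theorem sin_sub_mul_cos_le_pi_sq_mul_sin_sq {x : ℝ} (hx : 0 ≤ x) (hx' : x ≤ π / 2) :
    sin x - x * cos x ≤ π ^ 2 / 12 * x * sin x ^ 2 := by
  calc sin x - x * cos x ≤ x ^ 3 / 3 := sin_sub_mul_cos_le hx
    _ = x / 3 * x ^ 2 := by ring
    _ ≤ x / 3 * (π ^ 2 / 4 * sin x ^ 2) := by gcongr; exact sq_le_pi_sq_div_four_mul_sin_sq hx hx'
    _ = π ^ 2 / 12 * x * sin x ^ 2 := by ring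

end Real

theorem f_upper_bound_close (v δ : ℝ) (hv : 0 ≤ v) (h1 : 0 < δ) (h2 : δ ≤ π) :
    ((v + 1) * (δ - Real.sin δ)
      + 2 * Real.sqrt v * (2 * Real.sin (δ/2) - δ * Real.cos (δ/2)))
      / (2 * Real.sin (δ/2)^2)
    ≤ π^2 / 12 * (v + Real.sqrt v + 1) * δ := by
  have hsin : 0 < Real.sin (δ / 2) := sin_pos_of_pos_of_lt_pi (by linarith) (by linarith [pi_pos])
  rw [div_le_iff₀ (by positivity)]
  have hcubic := mul_le_mul_of_nonneg_left (sub_sin_le_pi_sq_mul_sin_half_sq h1.le h2)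
    (show 0 ≤ v + 1 by linarith)
  have hmixed := mul_le_mul_of_nonneg_left
    (sin_sub_mul_cos_le_pi_sq_mul_sin_sq (x := δ / 2) (by linarith) (by linarith))
    (sqrt_nonneg v)
  linarith
end

section
/- Let f(v,δ) = [(v+1)(δ - sin δ) + 2√v (2 sin(δ/2) - δ cos(δ/2))] / (2 sin²(δ/2)). Then for all v ≥ 0 and π ≤ δ < 2π, f(v,δ) ≤ (π⁸/12)(v + √v + 1)(2π - δ)⁻⁵. -/
open Real

set_option maxHeartbeats 1000000 in
theorem f_upper_bound_far (v δ : ℝ) (hv : 0 ≤ v) (h1 : π ≤ δ) (h2 : δ < 2*π) :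
    ((v + 1) * (δ - Real.sin δ)
      + 2 * Real.sqrt v * (2 * Real.sin (δ/2) - δ * Real.cos (δ/2)))
      / (2 * Real.sin (δ/2)^2)
    ≤ π^8 / 12 * (v + Real.sqrt v + 1) * (2*π - δ)⁻¹^5 := by
  have hπ := Real.pi_gt_d6
  have hπ2 := Real.pi_lt_d2
  set ε : ℝ := 2*π - δ with hεdef
  clear_value ε
  have hε0 : 0 < ε := by rw [hεdef]; linarith
  have hεπ : ε ≤ π := by rw [hεdef]; linarith
  have hδ0 : 0 < δ := by linarith
  have hs0 : 0 < Real.sin (δ/2) :=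
    Real.sin_pos_of_pos_of_lt_pi (by linarith) (by linarith)
  have hsin_eq : Real.sin (δ/2) = Real.sin (ε/2) := by
    rw [show ε/2 = π - δ/2 by rw [hεdef]; ring, Real.sin_pi_sub]
  have hjordan : ε / π ≤ Real.sin (δ/2) := by
    have h := Real.mul_le_sin (x := ε/2) (by linarith) (by linarith)
    rw [← hsin_eq] at h
    calc ε / π = 2/π * (ε/2) := by ring
    _ ≤ Real.sin (δ/2) := h
  -- bound on δ - sin δ
  have hA : δ - Real.sin δ ≤ 2*δ - π := by
    have h := Real.sin_le (x := δ - π) (by linarith)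
    rw [Real.sin_sub_pi] at h
    linarith
  -- bound on 2 sin(δ/2) - δ cos(δ/2)
  have hB : 2 * Real.sin (δ/2) - δ * Real.cos (δ/2) ≤ 2 + π*(δ - π) := by
    have hc : -Real.cos (δ/2) ≤ (δ - π)/2 := by
      have h := Real.sin_le (x := δ/2 - π/2) (by linarith)
      rw [Real.sin_sub_pi_div_two] at h
      linarith
    have hs1 : Real.sin (δ/2) ≤ 1 := Real.sin_le_one _
    nlinarith [mul_le_mul_of_nonneg_left hc (le_of_lt hδ0),
      mul_nonneg (sub_nonneg.2 h1) (by linarith : (0:ℝ) ≤ 2*π - δ)]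
  -- polynomial inequality (i)
  have hpisq : (6:ℝ) ≤ π^2 := by nlinarith [hπ]
  have hP : 6*(2*δ - π)*ε^3 ≤ π^6 := by
    have h3 : 2*δ - π = 3*π - 2*ε := by rw [hεdef]; ring
    rw [h3]
    have inner : 0 ≤ π^3 + π^2*ε + π*ε^2 - 2*ε^3 := by
      nlinarith [mul_nonneg (sub_nonneg.2 hεπ) (sq_nonneg ε),
        mul_nonneg (mul_nonneg hε0.le (sub_nonneg.2 hεπ)) Real.pi_pos.le,
        pow_nonneg Real.pi_pos.le 3]
    have key1 : 0 ≤ (π - ε) * (π^3 + π^2*ε + π*ε^2 - 2*ε^3) :=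
      mul_nonneg (by linarith) inner
    have hpi6 : 6*π^4 ≤ π^6 := by
      nlinarith [mul_nonneg (pow_nonneg Real.pi_pos.le 4) (by linarith : (0:ℝ) ≤ π^2 - 6)]
    nlinarith [key1, hpi6]
  -- polynomial inequality (ii)
  have e3 : (0:ℝ) ≤ ε^3 := by positivity
  have e4 : (0:ℝ) ≤ ε^4 := by positivity
  have p2 : (9.8696:ℝ) ≤ π^2 := by nlinarith [hπ]
  have p4 : (97.409:ℝ) ≤ π^4 := by nlinarith [p2, sq_nonneg (π^2 - 9.8696)]
  have p6 : (961.38:ℝ) ≤ π^6 := by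
    nlinarith [p2, p4, mul_le_mul p4 p2 (by norm_num) (by positivity)]
  have b1 : 12*π^2*ε^3 ≤ 119.07*ε^3 := by
    nlinarith [mul_nonneg e3 (by linarith : (0:ℝ) ≤ 3.15 - π), Real.pi_pos]
  have b2 : 37.699*ε^4 ≤ 12*π*ε^4 := by
    have h12 : (0:ℝ) ≤ 12*π - 37.699 := by linarith
    nlinarith [mul_nonneg e4 h12]
  have hεn : ε ≤ 3.15 := by linarith
  have hQnum : 143.07*ε^3 ≤ 37.699*ε^4 + 961.38 := by
    nlinarith [sq_nonneg (ε^2 - 1.9*ε - 2.7), sq_nonneg (ε - 2.85), e3, hεn, hε0.le]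
  have hQ : 12*(2 + π*(δ - π))*ε^3 ≤ π^6 := by
    have h3 : δ - π = π - ε := by rw [hεdef]; ring
    rw [h3]
    have expand : 12*(2 + π*(π - ε))*ε^3 = 24*ε^3 + 12*π^2*ε^3 - 12*π*ε^4 := by ring
    linarith [b1, b2, p6, hQnum, expand.le, expand.ge]
  have hsv : 0 ≤ Real.sqrt v := Real.sqrt_nonneg v
  have hε3 : (0:ℝ) < 6*ε^3 := by positivity
  set K : ℝ := π^6/(6*ε^3) with hKdef
  have hK1 : 2*δ - π ≤ K := by
    rw [hKdef, le_div_iff₀ hε3]; linarith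
  have hK2 : 2*(2 + π*(δ - π)) ≤ K := by
    rw [hKdef, le_div_iff₀ hε3]; linarith
  have hNum : (v + 1) * (δ - Real.sin δ)
      + 2 * Real.sqrt v * (2 * Real.sin (δ/2) - δ * Real.cos (δ/2))
      ≤ (v + Real.sqrt v + 1) * K := by
    have t1 : (v+1) * (δ - Real.sin δ) ≤ (v+1) * K :=
      le_trans (mul_le_mul_of_nonneg_left hA (by linarith))
        (mul_le_mul_of_nonneg_left hK1 (by linarith))
    have t2 : 2 * Real.sqrt v * (2 * Real.sin (δ/2) - δ * Real.cos (δ/2))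
        ≤ Real.sqrt v * K := by
      calc 2 * Real.sqrt v * (2 * Real.sin (δ/2) - δ * Real.cos (δ/2))
          ≤ 2 * Real.sqrt v * (2 + π*(δ - π)) :=
            mul_le_mul_of_nonneg_left hB (by positivity)
        _ = Real.sqrt v * (2*(2 + π*(δ - π))) := by ring
        _ ≤ Real.sqrt v * K := mul_le_mul_of_nonneg_left hK2 hsv
    calc (v + 1) * (δ - Real.sin δ)
        + 2 * Real.sqrt v * (2 * Real.sin (δ/2) - δ * Real.cos (δ/2))
        ≤ (v+1) * K + Real.sqrt v * K := add_le_add t1 t2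
      _ = (v + Real.sqrt v + 1) * K := by ring
  have hkey : K ≤ π^8/12 * (ε⁻¹)^5 * (2 * Real.sin (δ/2)^2) := by
    have hs2 : ε^2/π^2 ≤ Real.sin (δ/2)^2 := by
      have := pow_le_pow_left₀ (by positivity : (0:ℝ) ≤ ε/π) hjordan 2
      calc ε^2/π^2 = (ε/π)^2 := by rw [div_pow]
        _ ≤ Real.sin (δ/2)^2 := this
    have heq : K = π^8/12 * (ε⁻¹)^5 * (2 * (ε^2/π^2)) := by
      rw [hKdef]
      have hπ0 : π ≠ 0 := by positivity
      have hε0' : ε ≠ 0 := ne_of_gt hε0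
      field_simp
      ring
    rw [heq]
    exact mul_le_mul_of_nonneg_left (by linarith) (by positivity)
  rw [div_le_iff₀ (by positivity : (0:ℝ) < 2 * Real.sin (δ/2)^2)]
  calc (v + 1) * (δ - Real.sin δ)
      + 2 * Real.sqrt v * (2 * Real.sin (δ/2) - δ * Real.cos (δ/2))
      ≤ (v + Real.sqrt v + 1) * K := hNum
    _ ≤ (v + Real.sqrt v + 1) * (π^8/12 * (ε⁻¹)^5 * (2 * Real.sin (δ/2)^2)) :=
        mul_le_mul_of_nonneg_left hkey (by positivity)
    _ = π^8 / 12 * (v + Real.sqrt v + 1) * ε⁻¹^5 * (2 * Real.sin (δ/2)^2) := by ring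
end

section
/- If π < θ < 2π, then (θ + sin θ)/2 < (θ - sin θ)/(1 - cos θ); if 0 < θ < π, then (θ + sin θ)/2 > (θ - sin θ)/(1 - cos θ); and for θ = π the two quantities are equal. -/
/-!
Write `θ = 2t` with `0 < t < π`. Since `1 - cos θ = 2 sin² t`, the difference of the two sides is
`(θ + sin θ)/2 - (θ - sin θ)/(1 - cos θ) = cos t · (sin t + sin³ t - t cos t) / sin² t`,
and the middle factor is positive on `(0, π)`: for `t < π/2` because `t < tan t`, beyond that
because `cos t ≤ 0`. So the comparison is decided by the sign of `cos (θ/2)`.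
-/

open Real

lemma mul_cos_lt_sin_add_sin_pow_three {t : ℝ} (ht0 : 0 < t) (htπ : t < π) :
    t * cos t < sin t + sin t ^ 3 := by
  have hsin : 0 < sin t := sin_pos_of_pos_of_lt_pi ht0 htπ
  have hsin3 : 0 < sin t ^ 3 := pow_pos hsin 3
  rcases lt_or_ge t (π / 2) with ht | ht
  · have hcos : 0 < cos t := cos_pos_of_mem_Ioo ⟨by linarith, ht⟩
    have htan : t < sin t / cos t := tan_eq_sin_div_cos t ▸ lt_tan ht0 ht
    linarith [(lt_div_iff₀ hcos).mp htan]
  · have hcos : cos t ≤ 0 := cos_nonpos_of_pi_div_two_le_of_le ht (by linarith)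
    nlinarith

lemma one_sub_cos_two_mul (t : ℝ) : 1 - cos (2 * t) = 2 * sin t ^ 2 := by
  rw [cos_two_mul', cos_sq']
  ring

lemma half_add_sin_sub_div_one_sub_cos_two_mul {t : ℝ} (h : sin t ≠ 0) :
    (2 * t + sin (2 * t)) / 2 - (2 * t - sin (2 * t)) / (1 - cos (2 * t)) =
      cos t * (sin t + sin t ^ 3 - t * cos t) / sin t ^ 2 := by
  rw [sin_two_mul, one_sub_cos_two_mul]
  field_simp
  linear_combination t * sin_sq_add_cos_sq t

theorem critical_point_location (θ : ℝ) (h1 : 0 < θ) (h2 : θ < 2*π) :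
    (π < θ → (θ + Real.sin θ)/2 < (θ - Real.sin θ)/(1 - Real.cos θ)) ∧
    (θ < π → (θ + Real.sin θ)/2 > (θ - Real.sin θ)/(1 - Real.cos θ)) ∧
    (θ = π → (θ + Real.sin θ)/2 = (θ - Real.sin θ)/(1 - Real.cos θ)) := by
  obtain ⟨t, rfl⟩ : ∃ t, θ = 2 * t := ⟨θ / 2, by ring⟩
  have ht0 : 0 < t := by linarith
  have htπ : t < π := by linarith
  have hsin : 0 < sin t := sin_pos_of_pos_of_lt_pi ht0 htπ
  have hsin2 : 0 < sin t ^ 2 := pow_pos hsin 2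
  have hg : 0 < sin t + sin t ^ 3 - t * cos t :=
    sub_pos.mpr (mul_cos_lt_sin_add_sin_pow_three ht0 htπ)
  have hdiff := half_add_sin_sub_div_one_sub_cos_two_mul hsin.ne'
  refine ⟨fun hπ => ?_, fun hπ => ?_, fun hπ => ?_⟩
  · have hcos : cos t < 0 := cos_neg_of_pi_div_two_lt_of_lt (by linarith) (by linarith)
    rw [← sub_neg, hdiff]
    exact div_neg_of_neg_of_pos (mul_neg_of_neg_of_pos hcos hg) hsin2
  · have hcos : 0 < cos t := cos_pos_of_mem_Ioo ⟨by linarith, by linarith⟩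
    rw [gt_iff_lt, ← sub_pos, hdiff]
    exact div_pos (mul_pos hcos hg) hsin2
  · have hcos : cos t = 0 := by rw [show t = π / 2 by linarith, cos_pi_div_two]
    rw [← sub_eq_zero, hdiff, hcos, zero_mul, zero_div]
end

section
/- The function v(x) = (1/2)(1 + cos(x₀⁻¹(x))), where x₀(θ) = (θ + sin θ)/2 maps [0, π] bijectively onto [0, π/2], is strictly decreasing and concave on [0, π/2]; in particular its second derivative equals -2/(1 + cos(x₀⁻¹(x)))² for 0 < x < π/2. -/
/-
Write x₀(θ) = (θ + sin θ)/2, so that x₀' = (1 + cos θ)/2 > 0 on (0, π). The hypotheses say that g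
inverts x₀ : [0, π] → [0, π/2]; hence g is strictly increasing, continuous as a monotone map onto an
interval, and g' = 2/(1 + cos g) inside. Then v = (1 + cos g)/2 has v' = -sin g/(1 + cos g), and
since (-sin θ/(1 + cos θ))' = -1/(1 + cos θ), the chain rule gives v'' = -2/(1 + cos g)² < 0.
-/

open Real Set

theorem MonotoneOn.strictMonoOn_of_rightInvOn {α β : Type*} [Preorder α] [LinearOrder β]
    {f : β → α} {g : α → β} {s : Set β} {t : Set α} (hf : MonotoneOn f s) (hg : MapsTo g t s)
    (hgf : RightInvOn g f t) : StrictMonoOn g t := by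
  intro x hx y hy hxy
  by_contra! hle
  have := hf (hg hy) (hg hx) hle
  rw [hgf hx, hgf hy] at this
  exact hxy.not_ge this

theorem MonotoneOn.continuousOn_of_ordConnected_image {α β : Type*} [LinearOrder α]
    [TopologicalSpace α] [OrderTopology α] [LinearOrder β] [TopologicalSpace β] [OrderTopology β]
    [DenselyOrdered β] {f : α → β} {s : Set α} (hf : MonotoneOn f s) [s.OrdConnected]
    (himg : (f '' s).OrdConnected) : ContinuousOn f s := by
  rw [continuousOn_iff_continuous_domRestrict]
  have hmono : Monotone ((mapsTo_image f s).restrict f s (f '' s)) :=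
    fun a b hab => hf a.2 b.2 hab
  exact continuous_subtype_val.comp
    (hmono.continuous_of_surjective (surjective_mapsTo_image_restrict f s))

theorem one_add_cos_pos {θ : ℝ} (hθ : θ ∈ Ioo (-π) π) : 0 < 1 + cos θ := by
  have hcos : 0 < cos (θ / 2) := cos_pos_of_mem_Ioo ⟨by linarith [hθ.1], by linarith [hθ.2]⟩
  have hsq := cos_sq (θ / 2)
  rw [mul_div_cancel₀ θ two_ne_zero] at hsq
  nlinarith

/-- The paper's `x₀`. -/
noncomputable def cycloidX (θ : ℝ) : ℝ := (θ + sin θ) / 2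

theorem hasDerivAt_cycloidX (θ : ℝ) : HasDerivAt cycloidX ((1 + cos θ) / 2) θ :=
  ((hasDerivAt_id θ).add (hasDerivAt_sin θ)).div_const 2

theorem strictMonoOn_cycloidX : StrictMonoOn cycloidX (Icc 0 π) := by
  refine strictMonoOn_of_deriv_pos (convex_Icc 0 π)
    (fun θ _ => (hasDerivAt_cycloidX θ).continuousAt.continuousWithinAt) fun θ hθ => ?_
  rw [interior_Icc] at hθ
  rw [(hasDerivAt_cycloidX θ).deriv]
  exact half_pos (one_add_cos_pos ⟨by linarith [hθ.1, pi_pos], hθ.2⟩)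

theorem mapsTo_cycloidX : MapsTo cycloidX (Icc 0 π) (Icc 0 (π / 2)) := by
  intro θ hθ
  have h0 := strictMonoOn_cycloidX.monotoneOn ⟨le_rfl, pi_pos.le⟩ hθ hθ.1
  have hπ := strictMonoOn_cycloidX.monotoneOn hθ ⟨pi_pos.le, le_rfl⟩ hθ.2
  simp only [cycloidX, sin_zero, sin_pi] at h0 hπ ⊢
  constructor <;> linarith

section InverseCycloidX

variable {g : ℝ → ℝ}

theorem leftInvOn_cycloidX_of_rightInvOn (hinv : RightInvOn g cycloidX (Icc 0 (π / 2)))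
    (hmaps : MapsTo g (Icc 0 (π / 2)) (Icc 0 π)) : LeftInvOn g cycloidX (Icc 0 π) :=
  strictMonoOn_cycloidX.injOn.rightInvOn_of_leftInvOn hinv mapsTo_cycloidX hmaps

theorem strictMonoOn_of_rightInvOn_cycloidX (hinv : RightInvOn g cycloidX (Icc 0 (π / 2)))
    (hmaps : MapsTo g (Icc 0 (π / 2)) (Icc 0 π)) : StrictMonoOn g (Icc 0 (π / 2)) :=
  strictMonoOn_cycloidX.monotoneOn.strictMonoOn_of_rightInvOn hmaps hinv

theorem mapsTo_Ioo_of_rightInvOn_cycloidX (hinv : RightInvOn g cycloidX (Icc 0 (π / 2)))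
    (hmaps : MapsTo g (Icc 0 (π / 2)) (Icc 0 π)) : MapsTo g (Ioo 0 (π / 2)) (Ioo 0 π) := by
  have hmono := strictMonoOn_of_rightInvOn_cycloidX hinv hmaps
  have hleft := leftInvOn_cycloidX_of_rightInvOn hinv hmaps
  have hg0 : g 0 = 0 := by simpa [cycloidX] using hleft ⟨le_rfl, pi_pos.le⟩
  have hgπ : g (π / 2) = π := by simpa [cycloidX] using hleft ⟨pi_pos.le, le_rfl⟩
  intro x hx
  have hx' := Ioo_subset_Icc_self hx
  exact ⟨hg0 ▸ hmono ⟨le_rfl, by linarith [pi_pos]⟩ hx' hx.1,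
    hgπ ▸ hmono hx' ⟨by linarith [pi_pos], le_rfl⟩ hx.2⟩

theorem continuousOn_of_rightInvOn_cycloidX (hinv : RightInvOn g cycloidX (Icc 0 (π / 2)))
    (hmaps : MapsTo g (Icc 0 (π / 2)) (Icc 0 π)) : ContinuousOn g (Icc 0 (π / 2)) := by
  have himg : g '' Icc 0 (π / 2) = Icc 0 π :=
    ((leftInvOn_cycloidX_of_rightInvOn hinv hmaps).surjOn mapsTo_cycloidX).image_eq_of_mapsTo hmaps
  exact (strictMonoOn_of_rightInvOn_cycloidX hinv hmaps).monotoneOn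
    |>.continuousOn_of_ordConnected_image (himg ▸ ordConnected_Icc)

theorem one_add_cos_pos_of_rightInvOn_cycloidX (hinv : RightInvOn g cycloidX (Icc 0 (π / 2)))
    (hmaps : MapsTo g (Icc 0 (π / 2)) (Icc 0 π)) {x : ℝ} (hx : x ∈ Ioo 0 (π / 2)) :
    0 < 1 + cos (g x) :=
  have hgx := mapsTo_Ioo_of_rightInvOn_cycloidX hinv hmaps hx
  one_add_cos_pos ⟨by linarith [hgx.1, pi_pos], hgx.2⟩

theorem hasDerivAt_of_rightInvOn_cycloidX (hinv : RightInvOn g cycloidX (Icc 0 (π / 2)))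
    (hmaps : MapsTo g (Icc 0 (π / 2)) (Icc 0 π)) {x : ℝ} (hx : x ∈ Ioo 0 (π / 2)) :
    HasDerivAt g (2 / (1 + cos (g x))) x := by
  have hpos := one_add_cos_pos_of_rightInvOn_cycloidX hinv hmaps hx
  have hcont : ContinuousAt g x :=
    (continuousOn_of_rightInvOn_cycloidX hinv hmaps).continuousAt (Icc_mem_nhds hx.1 hx.2)
  have hloc : ∀ᶠ y in nhds x, cycloidX (g y) = y :=
    Filter.eventually_of_mem (Icc_mem_nhds hx.1 hx.2) fun y hy => hinv hy
  simpa only [inv_div] using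
    (hasDerivAt_cycloidX (g x)).of_local_left_inverse hcont (half_pos hpos).ne' hloc

end InverseCycloidX

theorem hasDerivAt_neg_sin_div_one_add_cos {θ : ℝ} (hθ : 1 + cos θ ≠ 0) :
    HasDerivAt (fun t => -sin t / (1 + cos t)) (-1 / (1 + cos θ)) θ := by
  refine ((hasDerivAt_sin θ).neg.div ((hasDerivAt_cos θ).const_add 1) hθ).congr_deriv ?_
  simp only [Pi.neg_apply]
  field_simp
  linear_combination -sin_sq_add_cos_sq θ

section Composition

variable {g : ℝ → ℝ} {x : ℝ}

theorem hasDerivAt_half_one_add_cos_comp (hg : HasDerivAt g (2 / (1 + cos (g x))) x)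
    (hc : 1 + cos (g x) ≠ 0) :
    HasDerivAt (fun y => (1 + cos (g y)) / 2) (-sin (g x) / (1 + cos (g x))) x := by
  refine ((((hasDerivAt_cos (g x)).comp x hg).const_add 1).div_const 2).congr_deriv ?_
  field_simp

theorem hasDerivAt_neg_sin_div_one_add_cos_comp (hg : HasDerivAt g (2 / (1 + cos (g x))) x)
    (hc : 1 + cos (g x) ≠ 0) :
    HasDerivAt (fun y => -sin (g y) / (1 + cos (g y))) (-2 / (1 + cos (g x)) ^ 2) x := by
  refine ((hasDerivAt_neg_sin_div_one_add_cos hc).comp x hg).congr_deriv ?_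
  field_simp

end Composition

theorem curve_decreasing_concave_general (g : ℝ → ℝ)
    (hg2 : ∀ x ∈ Set.Icc (0:ℝ) (π/2), (g x + Real.sin (g x))/2 = x)
    (hg3 : ∀ x ∈ Set.Icc (0:ℝ) (π/2), g x ∈ Set.Icc (0:ℝ) π) :
    StrictAntiOn (fun x : ℝ => (1 + Real.cos (g x))/2) (Set.Icc 0 (π/2)) ∧
    ConcaveOn ℝ (Set.Icc 0 (π/2)) (fun x : ℝ => (1 + Real.cos (g x))/2) ∧
    ∀ x ∈ Set.Ioo (0:ℝ) (π/2),
      deriv (deriv (fun x : ℝ => (1 + Real.cos (g x))/2)) x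
        = -2 / (1 + Real.cos (g x))^2 := by
  have hinv : RightInvOn g cycloidX (Icc 0 (π / 2)) := hg2
  have hmaps : MapsTo g (Icc 0 (π / 2)) (Icc 0 π) := fun x hx => hg3 x hx
  have hg' x (hx : x ∈ Ioo 0 (π / 2)) := hasDerivAt_of_rightInvOn_cycloidX hinv hmaps hx
  have hc x (hx : x ∈ Ioo 0 (π / 2)) := (one_add_cos_pos_of_rightInvOn_cycloidX hinv hmaps hx).ne'
  have hv' : ∀ x ∈ Ioo 0 (π / 2), HasDerivAt (fun y => (1 + cos (g y)) / 2)
      (-sin (g x) / (1 + cos (g x))) x := fun x hx =>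
    hasDerivAt_half_one_add_cos_comp (hg' x hx) (hc x hx)
  have hv'' : ∀ x ∈ Ioo 0 (π / 2), HasDerivAt (fun y => -sin (g y) / (1 + cos (g y)))
      (-2 / (1 + cos (g x)) ^ 2) x := fun x hx =>
    hasDerivAt_neg_sin_div_one_add_cos_comp (hg' x hx) (hc x hx)
  refine ⟨?_, ?_, fun x hx => ?_⟩
  · intro x hx y hy hxy
    have hcos := strictAntiOn_cos.comp_strictMonoOn
      (strictMonoOn_of_rightInvOn_cycloidX hinv hmaps) hmaps hx hy hxy
    simp only [Function.comp_apply] at hcos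
    linarith
  · refine concaveOn_of_hasDerivWithinAt2_nonpos (convex_Icc _ _)
      (f' := fun x => -sin (g x) / (1 + cos (g x))) (f'' := fun x => -2 / (1 + cos (g x)) ^ 2)
      ((continuous_cos.comp_continuousOn
        (continuousOn_of_rightInvOn_cycloidX hinv hmaps)).const_add 1 |>.div_const 2)
      ?_ ?_ fun x _ => div_nonpos_of_nonpos_of_nonneg (by norm_num) (sq_nonneg _)
    all_goals rw [interior_Icc]
    · exact fun x hx => (hv' x hx).hasDerivWithinAt
    · exact fun x hx => (hv'' x hx).hasDerivWithinAt
  · have hderiv : deriv (fun y => (1 + cos (g y)) / 2) =ᶠ[nhds x]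
        fun y => -sin (g y) / (1 + cos (g y)) :=
      Filter.eventually_of_mem (Ioo_mem_nhds hx.1 hx.2) fun y hy => (hv' y hy).deriv
    rw [hderiv.deriv_eq, (hv'' x hx).deriv]

theorem curve_decreasing_concave (g : ℝ → ℝ)
    (hg1 : ∀ θ ∈ Set.Icc (0:ℝ) π, g ((θ + Real.sin θ)/2) = θ)
    (hg2 : ∀ x ∈ Set.Icc (0:ℝ) (π/2), (g x + Real.sin (g x))/2 = x)
    (hg3 : ∀ x ∈ Set.Icc (0:ℝ) (π/2), g x ∈ Set.Icc (0:ℝ) π) :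
    StrictAntiOn (fun x : ℝ => (1 + Real.cos (g x))/2) (Set.Icc 0 (π/2)) ∧
    ConcaveOn ℝ (Set.Icc 0 (π/2)) (fun x : ℝ => (1 + Real.cos (g x))/2) ∧
    ∀ x ∈ Set.Ioo (0:ℝ) (π/2),
      deriv (deriv (fun x : ℝ => (1 + Real.cos (g x))/2)) x
        = -2 / (1 + Real.cos (g x))^2 :=
  curve_decreasing_concave_general g hg2 hg3
end

section
/- For all θ with 0 < θ < 2π, θ² + θ sin θ > 8 sin²(θ/2). -/
open Real

lemma key_sq (t : ℝ) (h1 : 0 < t) (h2 : t < 2*π) :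
    0 < 2 - 2*Real.cos t - t*Real.sin t := by
  have hx1 : 0 < t/2 := by linarith
  have hx2 : t/2 < π := by linarith
  have hs : 0 < Real.sin (t/2) := Real.sin_pos_of_pos_of_lt_pi hx1 hx2
  have hst : Real.sin t = 2 * Real.sin (t/2) * Real.cos (t/2) := by
    rw [show t = 2*(t/2) by ring, Real.sin_two_mul]; ring_nf
  have hct : Real.cos t = 1 - 2 * Real.sin (t/2)^2 := by
    have h := Real.cos_two_mul (t/2)
    rw [show 2*(t/2) = t by ring] at h
    have h2 := Real.sin_sq_add_cos_sq (t/2)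
    nlinarith
  have hkey : (t/2) * Real.cos (t/2) < Real.sin (t/2) := by
    rcases le_or_gt (Real.cos (t/2)) 0 with hc | hc
    · nlinarith
    · have hlt : t/2 < π/2 := by
        by_contra h
        push_neg at h
        exact absurd (Real.cos_nonpos_of_pi_div_two_le_of_le h (by linarith)) (not_le.2 hc)
      have htan := Real.lt_tan hx1 hlt
      rw [Real.tan_eq_sin_div_cos, lt_div_iff₀ hc] at htan
      linarith
  nlinarith [hs, hkey, hst, hct]

lemma f1_pos (t : ℝ) (h1 : 0 < t) (h2 : t < 2*π) :
    0 < 2*t - 3*Real.sin t + t*Real.cos t := by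
  have hπ := Real.pi_pos
  have mono : StrictMonoOn (fun u => 2*u - 3*Real.sin u + u*Real.cos u) (Set.Icc 0 (2*π)) := by
    apply strictMonoOn_of_deriv_pos (convex_Icc _ _)
    · fun_prop
    · intro u hu
      rw [interior_Icc] at hu
      have hd : HasDerivAt (fun u : ℝ => 2*u - 3*Real.sin u + u*Real.cos u)
          (2*1 - 3*Real.cos u + (1*Real.cos u + u*(-Real.sin u))) u := by
        exact (((hasDerivAt_id u).const_mul 2).sub ((Real.hasDerivAt_sin u).const_mul 3)).add
          ((hasDerivAt_id u).mul (Real.hasDerivAt_cos u))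
      rw [hd.deriv]
      have := key_sq u hu.1 hu.2
      nlinarith
  have := mono (Set.mem_Icc.2 ⟨le_refl 0, by linarith⟩)
    (Set.mem_Icc.2 ⟨le_of_lt h1, le_of_lt h2⟩) h1
  simpa using this

theorem sq_add_sin_gt (θ : ℝ) (h1 : 0 < θ) (h2 : θ < 2*π) :
    θ^2 + θ*Real.sin θ > 8 * Real.sin (θ/2)^2 := by
  have hπ := Real.pi_pos
  have mono : StrictMonoOn (fun u => u^2 + u*Real.sin u + 4*Real.cos u - 4) (Set.Icc 0 (2*π)) := by
    apply strictMonoOn_of_deriv_pos (convex_Icc _ _)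
    · fun_prop
    · intro u hu
      rw [interior_Icc] at hu
      have hd : HasDerivAt (fun u : ℝ => u^2 + u*Real.sin u + 4*Real.cos u - 4)
          ((2*u^1 + (1*Real.sin u + u*Real.cos u) + 4*(-Real.sin u)) - 0) u := by
        exact (((hasDerivAt_pow 2 u).add ((hasDerivAt_id u).mul (Real.hasDerivAt_sin u))).add
          ((Real.hasDerivAt_cos u).const_mul 4)).sub (hasDerivAt_const u 4)
      rw [hd.deriv]
      have := f1_pos u hu.1 hu.2
      nlinarith
  have hg : (0:ℝ) < θ^2 + θ*Real.sin θ + 4*Real.cos θ - 4 := by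
    have := mono (Set.mem_Icc.2 ⟨le_refl 0, by linarith⟩)
      (Set.mem_Icc.2 ⟨le_of_lt h1, le_of_lt h2⟩) h1
    simpa using this
  have hct : Real.cos θ = 1 - 2 * Real.sin (θ/2)^2 := by
    have h := Real.cos_two_mul (θ/2)
    rw [show 2*(θ/2) = θ by ring] at h
    have h2 := Real.sin_sq_add_cos_sq (θ/2)
    nlinarith
  linarith
end

section
/- The function -A, where A(θ) = (θ cos(θ/2) - 2 sin(θ/2))/(θ - sin θ), is positive and strictly increasing on (0, 2π); moreover the function B(θ) = (1 - cos θ)/(θ - sin θ) is positive and strictly decreasing on (0, 2π). -/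
/-!
Write `P θ = 2 sin (θ/2) - θ cos (θ/2)` and `D θ = θ - sin θ`, so that `-A = P / D` and
`B = (1 - cos θ) / D`. Since `P 0 = 0` and `P' θ = (θ/2) sin (θ/2) > 0`, `P` is positive on
`(0, 2π)`. By the quotient rule, monotonicity of `f / D` is decided by the sign of
`f' D - f D'`. For `B` this is `-2 sin (θ/2) P θ < 0`. For `-A` it is `sin (θ/2) k θ / 2` with
`k θ = θ² + θ sin θ + 4 cos θ - 4`, which is positive because `k 0 = k' 0 = 0` and
`k'' θ = 2 sin (θ/2) P θ > 0`.
-/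

open Real Set

theorem pos_of_eq_zero_of_hasDerivAt_pos {f f' : ℝ → ℝ} {a b x : ℝ}
    (hf : ∀ y, HasDerivAt f (f' y) y) (hfa : f a = 0) (hf' : ∀ y ∈ Ioo a b, 0 < f' y)
    (hx : x ∈ Ioo a b) : 0 < f x := by
  have hmono : StrictMonoOn f (Icc a b) :=
    strictMonoOn_of_hasDerivWithinAt_pos (convex_Icc a b)
      (fun y _ ↦ (hf y).continuousAt.continuousWithinAt) (fun y _ ↦ (hf y).hasDerivWithinAt)
      (by rwa [interior_Icc])
  simpa [hfa] using hmono (left_mem_Icc.2 (hx.1.trans hx.2).le) (Ioo_subset_Icc_self hx) hx.1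

theorem strictMonoOn_div_of_mul_sub_mul_pos {f g f' g' : ℝ → ℝ} {a b : ℝ}
    (hf : ∀ x ∈ Ioo a b, HasDerivAt f (f' x) x) (hg : ∀ x ∈ Ioo a b, HasDerivAt g (g' x) x)
    (hg₀ : ∀ x ∈ Ioo a b, g x ≠ 0) (h : ∀ x ∈ Ioo a b, 0 < f' x * g x - f x * g' x) :
    StrictMonoOn (fun x ↦ f x / g x) (Ioo a b) := by
  have hderiv : ∀ x ∈ Ioo a b,
      HasDerivAt (fun x ↦ f x / g x) ((f' x * g x - f x * g' x) / g x ^ 2) x :=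
    fun x hx ↦ (hf x hx).div (hg x hx) (hg₀ x hx)
  refine strictMonoOn_of_hasDerivWithinAt_pos (convex_Ioo a b)
    (fun x hx ↦ (hderiv x hx).continuousAt.continuousWithinAt) (by
      rw [interior_Ioo]; exact fun x hx ↦ (hderiv x hx).hasDerivWithinAt) ?_
  rw [interior_Ioo]
  exact fun x hx ↦ div_pos (h x hx) (sq_pos_of_ne_zero (hg₀ x hx))

theorem strictAntiOn_div_of_mul_sub_mul_neg {f g f' g' : ℝ → ℝ} {a b : ℝ}
    (hf : ∀ x ∈ Ioo a b, HasDerivAt f (f' x) x) (hg : ∀ x ∈ Ioo a b, HasDerivAt g (g' x) x)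
    (hg₀ : ∀ x ∈ Ioo a b, g x ≠ 0) (h : ∀ x ∈ Ioo a b, f' x * g x - f x * g' x < 0) :
    StrictAntiOn (fun x ↦ f x / g x) (Ioo a b) := by
  have hneg := strictMonoOn_div_of_mul_sub_mul_pos (fun x hx ↦ (hf x hx).neg) hg hg₀
    (fun x hx ↦ by simp only [Pi.neg_apply]; linarith [h x hx])
  intro x hx y hy hxy
  simpa only [Pi.neg_apply, neg_div, neg_lt_neg_iff] using hneg hx hy hxy

theorem sin_eq_two_mul_sin_half_mul_cos_half (θ : ℝ) :
    sin θ = 2 * sin (θ / 2) * cos (θ / 2) := by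
  rw [← sin_two_mul, mul_div_cancel₀ θ two_ne_zero]

theorem cos_eq_one_sub_two_mul_sin_half_sq (θ : ℝ) : cos θ = 1 - 2 * sin (θ / 2) ^ 2 := by
  rw [← cos_two_mul_eq_one_sub, mul_div_cancel₀ θ two_ne_zero]

theorem sin_half_pos {θ : ℝ} (h : θ ∈ Ioo 0 (2 * π)) : 0 < sin (θ / 2) :=
  sin_pos_of_pos_of_lt_pi (by linarith [h.1]) (by linarith [h.2])

theorem one_sub_cos_pos {θ : ℝ} (h : θ ∈ Ioo 0 (2 * π)) : 0 < 1 - cos θ := by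
  rw [cos_eq_one_sub_two_mul_sin_half_sq]
  nlinarith [sin_half_pos h]

theorem hasDerivAt_two_mul_sin_half_sub_mul_cos_half (θ : ℝ) :
    HasDerivAt (fun x ↦ 2 * sin (x / 2) - x * cos (x / 2)) (θ / 2 * sin (θ / 2)) θ := by
  have hhalf : HasDerivAt (fun x : ℝ ↦ x / 2) (1 / 2) θ := (hasDerivAt_id θ).div_const 2
  refine ((hhalf.sin.const_mul 2).sub ((hasDerivAt_id' θ).mul hhalf.cos)).congr_deriv ?_
  ring

theorem two_mul_sin_half_sub_mul_cos_half_pos {θ : ℝ} (h : θ ∈ Ioo 0 (2 * π)) :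
    0 < 2 * sin (θ / 2) - θ * cos (θ / 2) :=
  pos_of_eq_zero_of_hasDerivAt_pos (f := fun x ↦ 2 * sin (x / 2) - x * cos (x / 2))
    hasDerivAt_two_mul_sin_half_sub_mul_cos_half (by simp)
    (fun _ hx ↦ mul_pos (half_pos hx.1) (sin_half_pos hx)) h

theorem sq_add_mul_sin_add_four_mul_cos_sub_four_pos {θ : ℝ} (h : θ ∈ Ioo 0 (2 * π)) :
    0 < θ ^ 2 + θ * sin θ + 4 * cos θ - 4 := by
  have hk'' : ∀ x ∈ Ioo 0 (2 * π), 0 < 2 - 2 * cos x - x * sin x := fun x hx ↦ by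
    have hfactor : 2 - 2 * cos x - x * sin x =
        2 * sin (x / 2) * (2 * sin (x / 2) - x * cos (x / 2)) := by
      rw [cos_eq_one_sub_two_mul_sin_half_sq x, sin_eq_two_mul_sin_half_mul_cos_half x]
      ring
    rw [hfactor]
    exact mul_pos (mul_pos two_pos (sin_half_pos hx)) (two_mul_sin_half_sub_mul_cos_half_pos hx)
  have hk' : ∀ x ∈ Ioo 0 (2 * π), 0 < 2 * x + x * cos x - 3 * sin x := by
    refine fun x hx ↦ pos_of_eq_zero_of_hasDerivAt_pos
      (f := fun x ↦ 2 * x + x * cos x - 3 * sin x) (fun y ↦ ?_) (by simp) hk'' hx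
    refine ((((hasDerivAt_id' y).const_mul 2).add ((hasDerivAt_id' y).mul (hasDerivAt_cos y))).sub
      ((hasDerivAt_sin y).const_mul 3)).congr_deriv ?_
    ring
  refine pos_of_eq_zero_of_hasDerivAt_pos (f := fun x ↦ x ^ 2 + x * sin x + 4 * cos x - 4)
    (fun y ↦ ?_) (by simp) hk' h
  refine ((((hasDerivAt_pow 2 y).add ((hasDerivAt_id' y).mul (hasDerivAt_sin y))).add
    ((hasDerivAt_cos y).const_mul 4)).sub_const 4).congr_deriv ?_
  ring

theorem strictMonoOn_two_mul_sin_half_sub_mul_cos_half_div :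
    StrictMonoOn (fun θ ↦ (2 * sin (θ / 2) - θ * cos (θ / 2)) / (θ - sin θ))
      (Ioo 0 (2 * π)) := by
  refine strictMonoOn_div_of_mul_sub_mul_pos
    (fun θ _ ↦ hasDerivAt_two_mul_sin_half_sub_mul_cos_half θ)
    (fun θ _ ↦ (hasDerivAt_id' θ).sub (hasDerivAt_sin θ))
    (fun θ h ↦ (sub_pos.2 (sin_lt h.1)).ne') fun θ h ↦ ?_
  have hwronskian : θ / 2 * sin (θ / 2) * (θ - sin θ) -
      (2 * sin (θ / 2) - θ * cos (θ / 2)) * (1 - cos θ) =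
      sin (θ / 2) * (θ ^ 2 + θ * sin θ + 4 * cos θ - 4) / 2 := by
    rw [cos_eq_one_sub_two_mul_sin_half_sq θ, sin_eq_two_mul_sin_half_mul_cos_half θ]
    ring
  rw [hwronskian]
  exact half_pos (mul_pos (sin_half_pos h) (sq_add_mul_sin_add_four_mul_cos_sub_four_pos h))

theorem strictAntiOn_one_sub_cos_div :
    StrictAntiOn (fun θ ↦ (1 - cos θ) / (θ - sin θ)) (Ioo 0 (2 * π)) := by
  refine strictAntiOn_div_of_mul_sub_mul_neg
    (fun θ _ ↦ by simpa using (hasDerivAt_cos θ).const_sub 1)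
    (fun θ _ ↦ (hasDerivAt_id' θ).sub (hasDerivAt_sin θ))
    (fun θ h ↦ (sub_pos.2 (sin_lt h.1)).ne') fun θ h ↦ ?_
  have hwronskian : sin θ * (θ - sin θ) - (1 - cos θ) * (1 - cos θ) =
      -(2 * sin (θ / 2) * (2 * sin (θ / 2) - θ * cos (θ / 2))) := by
    rw [cos_eq_one_sub_two_mul_sin_half_sq θ, sin_eq_two_mul_sin_half_mul_cos_half θ]
    linear_combination (-4 * sin (θ / 2) ^ 2) * sin_sq_add_cos_sq (θ / 2)
  rw [hwronskian, neg_neg_iff_pos]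
  exact mul_pos (mul_pos two_pos (sin_half_pos h)) (two_mul_sin_half_sub_mul_cos_half_pos h)

theorem A_B_monotonicity :
    (∀ θ ∈ Set.Ioo (0:ℝ) (2*π),
      0 < -((θ*Real.cos (θ/2) - 2*Real.sin (θ/2))/(θ - Real.sin θ))) ∧
    StrictMonoOn
      (fun θ : ℝ => -((θ*Real.cos (θ/2) - 2*Real.sin (θ/2))/(θ - Real.sin θ)))
      (Set.Ioo 0 (2*π)) ∧
    (∀ θ ∈ Set.Ioo (0:ℝ) (2*π),
      0 < (1 - Real.cos θ)/(θ - Real.sin θ)) ∧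
    StrictAntiOn (fun θ : ℝ => (1 - Real.cos θ)/(θ - Real.sin θ))
      (Set.Ioo 0 (2*π)) := by
  simp only [← neg_div, neg_sub]
  exact ⟨fun θ h ↦ div_pos (two_mul_sin_half_sub_mul_cos_half_pos h) (sub_pos.2 (sin_lt h.1)),
    strictMonoOn_two_mul_sin_half_sub_mul_cos_half_div,
    fun θ h ↦ div_pos (one_sub_cos_pos h) (sub_pos.2 (sin_lt h.1)),
    strictAntiOn_one_sub_cos_div⟩
end
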